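/- Let L be a coatomic logic which enjoys the simple local IL (with respect to some family). Then a rule Γ ⊢ φ̄ is antiadmissible in L if and only if for every Δ ⊆ Fm: φ̄ ∪ Δ ⊢_L Fm implies Γ ∪ Δ ⊢_L Fm. Moreover, in this condition Δ may be restricted to range over the simple theories of L. -/

import Mathlib

set_option linter.unusedVariables false

open FirstOrder Set

universe u

/-- Substitution composition for terms of a first-order language. -/
theorem FirstOrder.Language.Term.subst_subst' {L : FirstOrder.Language.{u, u}} {α β γ : Type u}
    (t : L.Term α) (f : α → L.Term β) (g : β → L.Term γ) :
    (t.subst f).subst g = t.subst (fun i => (f i).subst g) := by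
  induction t with
  | var => rfl
  | func f ts ih => simp only [Language.Term.subst, ih]

/-- A logic over the absolutely free algebra of `L`-terms in variables `Var`. -/
structure Logic (L : FirstOrder.Language.{u, u}) (Var : Type u) where
  Deriv : Set (L.Term Var) → L.Term Var → Prop
  deriv_refl : ∀ φ : L.Term Var, Deriv {φ} φ
  deriv_mono : ∀ {Γ Δ : Set (L.Term Var)} {φ : L.Term Var}, Deriv Γ φ → Γ ⊆ Δ → Deriv Δ φ
  deriv_cut : ∀ {Γ Φ : Set (L.Term Var)} {φ : L.Term Var},
      (∀ ψ ∈ Φ, Deriv Γ ψ) → Deriv Φ φ → Deriv Γ φ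
  deriv_subst : ∀ {Γ : Set (L.Term Var)} {φ : L.Term Var} (σ : Var → L.Term Var),
      Deriv Γ φ → Deriv ((fun t => t.subst σ) '' Γ) (φ.subst σ)

namespace Logic

variable {L : FirstOrder.Language.{u, u}} {Var : Type u} (Lg : Logic L Var)

/-- `Γ ⊢ φ` for every `φ ∈ Δ`. -/
def DerivAll (Γ Δ : Set (L.Term Var)) : Prop := ∀ φ ∈ Δ, Lg.Deriv Γ φ

/-- `Γ ⊢ Fm`, i.e. `Γ` derives every formula. -/
def Inc (Γ : Set (L.Term Var)) : Prop := ∀ φ : L.Term Var, Lg.Deriv Γ φ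

/-- A theory of the logic: a deductively closed set of formulas. -/
def IsTheory (T : Set (L.Term Var)) : Prop := ∀ φ : L.Term Var, Lg.Deriv T φ → φ ∈ T

/-- A simple theory: a maximal non-trivial theory. -/
def IsSimple (T : Set (L.Term Var)) : Prop :=
  Lg.IsTheory T ∧ T ≠ univ ∧
    ∀ T' : Set (L.Term Var), Lg.IsTheory T' → T' ≠ univ → T ⊆ T' → T' = T

/-- A semisimple theory: an intersection of simple theories. -/
def IsSemisimple (T : Set (L.Term Var)) : Prop :=
  ∃ S : Set (Set (L.Term Var)), (∀ U ∈ S, Lg.IsSimple U) ∧ T = ⋂₀ S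

/-- A semisimple logic: every theory is an intersection of simple theories. -/
def Semisimple : Prop := ∀ T : Set (L.Term Var), Lg.IsTheory T → Lg.IsSemisimple T

/-- A coatomic logic: every non-trivial theory extends to a simple theory. -/
def Coatomic : Prop :=
  ∀ T : Set (L.Term Var), Lg.IsTheory T → T ≠ univ → ∃ U, Lg.IsSimple U ∧ T ⊆ U

/-- A matrix `⟨A, F⟩` is a model of the logic if the preimage of `F` under any
homomorphism (equivalently, the realization along any valuation) is a theory. -/
def IsModel (A : Type u) [L.Structure A] (F : Set A) : Prop :=
  ∀ v : Var → A, Lg.IsTheory {φ : L.Term Var | φ.realize v ∈ F}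

/-- `Γ ⊢ ∅`: `Γ` cannot be jointly designated in any non-trivial model. -/
def Antitheorem (Γ : Set (L.Term Var)) : Prop :=
  ∀ (A : Type u) [L.Structure A], ∀ F : Set A, Lg.IsModel A F → F ≠ univ →
    ∀ v : Var → A, ¬((fun φ : L.Term Var => φ.realize v) '' Γ ⊆ F)

/-- κ-compactness: every inconsistent set has an inconsistent subset of size `< κ`. -/
def Compact (κ : Cardinal.{u}) : Prop :=
  ∀ Γ : Set (L.Term Var), Lg.Inc Γ → ∃ Γ' ⊆ Γ, Cardinal.mk ↥Γ' < κ ∧ Lg.Inc Γ'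

/-- κ-arity: any derivation uses fewer than κ premises. -/
def Ary (κ : Cardinal.{u}) : Prop :=
  ∀ (Γ : Set (L.Term Var)) (φ : L.Term Var), Lg.Deriv Γ φ →
    ∃ Γ' ⊆ Γ, Cardinal.mk ↥Γ' < κ ∧ Lg.Deriv Γ' φ

end Logic

/-- A parametrized family: for each ordinal `α`, a family of sets of formulas in
`α`-many variable slots together with parameter slots (indexed by `Var`). -/
abbrev PFam (L : FirstOrder.Language.{u, u}) (Var : Type u) : Type (u + 1) :=
  ∀ α : Ordinal.{u}, Set (Set (L.Term (α.ToType ⊕ Var)))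

/-- A local (parameter-free) family. -/
abbrev LFam (L : FirstOrder.Language.{u, u}) (Var : Type u) : Type (u + 1) :=
  ∀ α : Ordinal.{u}, Set (Set (L.Term α.ToType))

/-- A global family: a single set of formulas for each ordinal `α`. -/
abbrev GFam (L : FirstOrder.Language.{u, u}) (Var : Type u) : Type (u + 1) :=
  ∀ α : Ordinal.{u}, Set (L.Term α.ToType)

namespace Logic

variable {L : FirstOrder.Language.{u, u}} {Var : Type u}

/-- `I(φ̄, π̄)`: instantiation of a parametrized set of formulas. -/
def pInst {α : Ordinal.{u}} (I : Set (L.Term (α.ToType ⊕ Var)))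
    (phis : α.ToType → L.Term Var) (pis : Var → L.Term Var) : Set (L.Term Var) :=
  (fun t => t.subst (Sum.elim phis pis)) '' I

/-- `I(φ̄)`: instantiation of a parameter-free set of formulas. -/
def lInst {α : Ordinal.{u}} (I : Set (L.Term α.ToType))
    (phis : α.ToType → L.Term Var) : Set (L.Term Var) :=
  (fun t => t.subst phis) '' I

variable (Lg : Logic L Var)

/-- The κ-ary parametrized local inconsistency lemma w.r.t. the family `Ψ`. -/
def ParamLocalIL (κ : Cardinal.{u}) (Ψ : PFam L Var) : Prop :=
  ∀ α : Ordinal.{u}, 0 < α → α < κ.ord →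
    ∀ (Γ : Set (L.Term Var)) (phis : α.ToType → L.Term Var),
      Lg.Inc (Γ ∪ range phis) ↔
        ∃ I ∈ Ψ α, ∃ pis : Var → L.Term Var, Lg.DerivAll Γ (pInst I phis pis)

/-- The κ-ary local inconsistency lemma w.r.t. the family `Ψ`. -/
def LocalIL (κ : Cardinal.{u}) (Ψ : LFam L Var) : Prop :=
  ∀ α : Ordinal.{u}, 0 < α → α < κ.ord →
    ∀ (Γ : Set (L.Term Var)) (phis : α.ToType → L.Term Var),
      Lg.Inc (Γ ∪ range phis) ↔ ∃ I ∈ Ψ α, Lg.DerivAll Γ (lInst I phis)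

/-- The κ-ary global inconsistency lemma w.r.t. the family `Ψ`. -/
def GlobalIL (κ : Cardinal.{u}) (Ψ : GFam L Var) : Prop :=
  Lg.LocalIL κ (fun α => {Ψ α})

/-- The κ-ary dual parametrized local inconsistency lemma w.r.t. the family `Ψ`. -/
def DualParamLocalIL (κ : Cardinal.{u}) (Ψ : PFam L Var) : Prop :=
  ∀ α : Ordinal.{u}, 0 < α → α < κ.ord →
    ∀ (Γ : Set (L.Term Var)) (phis : α.ToType → L.Term Var),
      (∀ i, Lg.Deriv Γ (phis i)) ↔
        ∀ I ∈ Ψ α, ∀ pis : Var → L.Term Var, Lg.Inc (Γ ∪ pInst I phis pis)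

/-- The κ-ary dual local inconsistency lemma w.r.t. the family `Ψ`. -/
def DualLocalIL (κ : Cardinal.{u}) (Ψ : LFam L Var) : Prop :=
  ∀ α : Ordinal.{u}, 0 < α → α < κ.ord →
    ∀ (Γ : Set (L.Term Var)) (phis : α.ToType → L.Term Var),
      (∀ i, Lg.Deriv Γ (phis i)) ↔ ∀ I ∈ Ψ α, Lg.Inc (Γ ∪ lInst I phis)

/-- The κ-ary dual global inconsistency lemma w.r.t. the family `Ψ`. -/
def DualGlobalIL (κ : Cardinal.{u}) (Ψ : GFam L Var) : Prop :=
  Lg.DualLocalIL κ (fun α => {Ψ α})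

/-- The κ-ary classical parametrized local IL: both the ordinary and dual IL. -/
def ClassicalParamLocalIL (κ : Cardinal.{u}) (Ψ : PFam L Var) : Prop :=
  Lg.ParamLocalIL κ Ψ ∧ Lg.DualParamLocalIL κ Ψ

/-- The κ-ary classical local IL: both the ordinary and dual IL. -/
def ClassicalLocalIL (κ : Cardinal.{u}) (Ψ : LFam L Var) : Prop :=
  Lg.LocalIL κ Ψ ∧ Lg.DualLocalIL κ Ψ

/-- The κ-ary classical global IL: both the ordinary and dual IL. -/
def ClassicalGlobalIL (κ : Cardinal.{u}) (Ψ : GFam L Var) : Prop :=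
  Lg.GlobalIL κ Ψ ∧ Lg.DualGlobalIL κ Ψ

/-- The κ-ary parametrized local law of the excluded middle w.r.t. `Ψ`. -/
def ParamLocalLEM (κ : Cardinal.{u}) (Ψ : PFam L Var) : Prop :=
  (∀ α : Ordinal.{u}, 0 < α → α < κ.ord → ∀ I ∈ Ψ α,
    ∀ (phis : α.ToType → L.Term Var) (pis : Var → L.Term Var),
      Lg.Inc (range phis ∪ pInst I phis pis)) ∧
  (∀ α : Ordinal.{u}, 0 < α → α < κ.ord →
    ∀ (Γ : Set (L.Term Var)) (phis : α.ToType → L.Term Var) (ψ : L.Term Var),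
      Lg.Deriv (Γ ∪ range phis) ψ →
      (∀ I ∈ Ψ α, ∀ pis : Var → L.Term Var, Lg.Deriv (Γ ∪ pInst I phis pis) ψ) →
      Lg.Deriv Γ ψ)

/-- The κ-ary local law of the excluded middle w.r.t. `Ψ`. -/
def LocalLEM (κ : Cardinal.{u}) (Ψ : LFam L Var) : Prop :=
  (∀ α : Ordinal.{u}, 0 < α → α < κ.ord → ∀ I ∈ Ψ α,
    ∀ phis : α.ToType → L.Term Var, Lg.Inc (range phis ∪ lInst I phis)) ∧
  (∀ α : Ordinal.{u}, 0 < α → α < κ.ord →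
    ∀ (Γ : Set (L.Term Var)) (phis : α.ToType → L.Term Var) (ψ : L.Term Var),
      Lg.Deriv (Γ ∪ range phis) ψ →
      (∀ I ∈ Ψ α, Lg.Deriv (Γ ∪ lInst I phis) ψ) → Lg.Deriv Γ ψ)

/-- The κ-ary simple parametrized local IL w.r.t. `Ψ`. -/
def SimpleParamLocalIL (κ : Cardinal.{u}) (Ψ : PFam L Var) : Prop :=
  (∀ α : Ordinal.{u}, 0 < α → α < κ.ord → ∀ I ∈ Ψ α,
    ∀ (phis : α.ToType → L.Term Var) (pis : Var → L.Term Var),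
      Lg.Inc (range phis ∪ pInst I phis pis)) ∧
  (∀ α : Ordinal.{u}, 0 < α → α < κ.ord →
    ∀ T : Set (L.Term Var), Lg.IsSimple T → ∀ phis : α.ToType → L.Term Var,
      Lg.Inc (T ∪ range phis) →
        ∃ I ∈ Ψ α, ∃ pis : Var → L.Term Var, Lg.DerivAll T (pInst I phis pis))

/-- The κ-ary simple local IL w.r.t. `Ψ`. -/
def SimpleLocalIL (κ : Cardinal.{u}) (Ψ : LFam L Var) : Prop :=
  (∀ α : Ordinal.{u}, 0 < α → α < κ.ord → ∀ I ∈ Ψ α,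
    ∀ phis : α.ToType → L.Term Var, Lg.Inc (range phis ∪ lInst I phis)) ∧
  (∀ α : Ordinal.{u}, 0 < α → α < κ.ord →
    ∀ T : Set (L.Term Var), Lg.IsSimple T → ∀ phis : α.ToType → L.Term Var,
      Lg.Inc (T ∪ range phis) → ∃ I ∈ Ψ α, Lg.DerivAll T (lInst I phis))

end Logic

/-- Family for the parametrized local DDT: sets of formulas `I(p̄, q, r̄)`. -/
abbrev PFamD (L : FirstOrder.Language.{u, u}) (Var : Type u) : Type (u + 1) :=
  ∀ α : Ordinal.{u}, Set (Set (L.Term (α.ToType ⊕ (PUnit.{u + 1} ⊕ Var))))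

/-- Family for the local DDT: sets of formulas `I(p̄, q)`. -/
abbrev LFamD (L : FirstOrder.Language.{u, u}) (Var : Type u) : Type (u + 1) :=
  ∀ α : Ordinal.{u}, Set (Set (L.Term (α.ToType ⊕ PUnit.{u + 1})))

/-- Family for the global DDT: a single set `I(p̄, q)` for each `α`. -/
abbrev GFamD (L : FirstOrder.Language.{u, u}) (Var : Type u) : Type (u + 1) :=
  ∀ α : Ordinal.{u}, Set (L.Term (α.ToType ⊕ PUnit.{u + 1}))

namespace Logic

variable {L : FirstOrder.Language.{u, u}} {Var : Type u}

/-- `I(φ̄, ψ)`: instantiation of a DDT set of formulas. -/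
def dInst {α : Ordinal.{u}} (I : Set (L.Term (α.ToType ⊕ PUnit.{u + 1})))
    (phis : α.ToType → L.Term Var) (ψ : L.Term Var) : Set (L.Term Var) :=
  (fun t => t.subst (Sum.elim phis (fun _ => ψ))) '' I

/-- `I(φ̄, ψ, π̄)`: instantiation of a parametrized DDT set of formulas. -/
def pdInst {α : Ordinal.{u}} (I : Set (L.Term (α.ToType ⊕ (PUnit.{u + 1} ⊕ Var))))
    (phis : α.ToType → L.Term Var) (ψ : L.Term Var) (pis : Var → L.Term Var) :
    Set (L.Term Var) :=
  (fun t => t.subst (Sum.elim phis (Sum.elim (fun _ => ψ) pis))) '' I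

variable (Lg : Logic L Var)

/-- The κ-ary local deduction--detachment theorem w.r.t. `Φ`. -/
def LocalDDT (κ : Cardinal.{u}) (Φ : LFamD L Var) : Prop :=
  ∀ α : Ordinal.{u}, 0 < α → α < κ.ord →
    ∀ (Γ : Set (L.Term Var)) (phis : α.ToType → L.Term Var) (ψ : L.Term Var),
      Lg.Deriv (Γ ∪ range phis) ψ ↔ ∃ I ∈ Φ α, Lg.DerivAll Γ (dInst I phis ψ)

/-- The κ-ary global deduction--detachment theorem w.r.t. `Φ`. -/
def GlobalDDT (κ : Cardinal.{u}) (Φ : GFamD L Var) : Prop :=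
  Lg.LocalDDT κ (fun α => {Φ α})

/-- The κ-ary parametrized local deduction--detachment theorem w.r.t. `Φ`. -/
def ParamLocalDDT (κ : Cardinal.{u}) (Φ : PFamD L Var) : Prop :=
  ∀ α : Ordinal.{u}, 0 < α → α < κ.ord →
    ∀ (Γ : Set (L.Term Var)) (phis : α.ToType → L.Term Var) (ψ : L.Term Var),
      Lg.Deriv (Γ ∪ range phis) ψ ↔
        ∃ I ∈ Φ α, ∃ pis : Var → L.Term Var, Lg.DerivAll Γ (pdInst I phis ψ pis)

/-- A protoimplication set: a set `Δ(p, q)` of formulas in two variables with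
`∅ ⊢ Δ(p, p)` and `p, Δ(p, q) ⊢ q` (stated via all instances, by structurality). -/
def HasProtoimplication : Prop :=
  ∃ Δ : Set (L.Term (ULift.{u} Bool)),
    (∀ φ : L.Term Var,
      Lg.DerivAll ∅ ((fun t => t.subst (fun _ => φ)) '' Δ)) ∧
    (∀ φ ψ : L.Term Var,
      Lg.Deriv (insert φ ((fun t => t.subst (fun b => if b.down then ψ else φ)) '' Δ)) ψ)

/-- A rule `Γ ⊢ φ̄` is antiadmissible: substitution instances preserve
inconsistency in every context. -/
def Antiadmissible {ι : Type u} (Γ : Set (L.Term Var)) (phis : ι → L.Term Var) : Prop :=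
  ∀ (σ : Var → L.Term Var) (Δ : Set (L.Term Var)),
    Lg.Inc (range (fun i => (phis i).subst σ) ∪ Δ) →
    Lg.Inc ((fun t => t.subst σ) '' Γ ∪ Δ)

/-- The semisimple companion of a logic: the logic determined by the
simple theories of `Lg`. -/
def companion (Lg : Logic L Var) : Logic L Var where
  Deriv Γ φ := ∀ T : Set (L.Term Var), Lg.IsSimple T →
    ∀ σ : Var → L.Term Var, (fun t => t.subst σ) '' Γ ⊆ T → φ.subst σ ∈ T
  deriv_refl := by
    intro φ T _ σ h
    exact h ⟨φ, rfl, rfl⟩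
  deriv_mono := by
    intro Γ Δ φ hΓ hsub T hT σ h
    exact hΓ T hT σ (fun x hx => h ((Set.image_mono hsub) hx))
  deriv_cut := by
    intro Γ Φ φ hΓ hΦ T hT σ h
    refine hΦ T hT σ ?_
    rintro x ⟨ψ, hψ, rfl⟩
    exact hΓ ψ hψ T hT σ h
  deriv_subst := by
    intro Γ φ σ hΓ T hT τ h
    rw [FirstOrder.Language.Term.subst_subst']
    refine hΓ T hT (fun v => (σ v).subst τ) ?_
    rintro x ⟨ψ, hψ, rfl⟩
    show (ψ.subst fun v => (σ v).subst τ) ∈ T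
    rw [← FirstOrder.Language.Term.subst_subst']
    exact h ⟨ψ.subst σ, ⟨ψ, hψ, rfl⟩, rfl⟩

/-- Equivalence of two parametrized IL families, stated through all of their
instances (which, by structurality, is equivalent to the schematic entailments
`I(p̄, q̄) ⊢ I'(p̄, π̄')`). -/
def FamEquiv (Lg : Logic L Var) (κ : Cardinal.{u}) (Ψ Ψ' : PFam L Var) : Prop :=
  (∀ α : Ordinal.{u}, 0 < α → α < κ.ord →
    ∀ I ∈ Ψ α, ∃ I' ∈ Ψ' α, ∃ pis' : Var → L.Term (α.ToType ⊕ Var),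
      ∀ (phis : α.ToType → L.Term Var) (rhos : Var → L.Term Var),
        Lg.DerivAll (pInst I phis rhos)
          (pInst I' phis (fun v => (pis' v).subst (Sum.elim phis rhos)))) ∧
  (∀ α : Ordinal.{u}, 0 < α → α < κ.ord →
    ∀ I' ∈ Ψ' α, ∃ I ∈ Ψ α, ∃ pis : Var → L.Term (α.ToType ⊕ Var),
      ∀ (phis : α.ToType → L.Term Var) (rhos : Var → L.Term Var),
        Lg.DerivAll (pInst I' phis rhos)
          (pInst I phis (fun v => (pis v).subst (Sum.elim phis rhos))))

end Logic



/-!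
A consistent set extends to a simple theory, so a context `Δ` with `Γ ∪ Δ` consistent may be
replaced by a simple theory containing it; this is why simple theories suffice. For substitution
instances: if `σ(φ̄) ∪ Δ ⊢ Fm` while `σ[Γ] ∪ Δ` lies in a simple theory `T`, then some
`σ(φᵢ) ∉ T`, so `T, σ(φᵢ) ⊢ Fm` and the unary simple local IL gives `T ⊢ I(σ(φᵢ))`. The theory
`σ⁻¹[T]` then contains `Γ` and `I(φᵢ)`, hence is inconsistent with `φᵢ`; the unsubstituted
criterion makes it trivial, forcing `σ(φᵢ) ∈ T`.
-/

theorem FirstOrder.Language.Term.subst_var {L : FirstOrder.Language.{u, u}} {α : Type u}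
    (t : L.Term α) : t.subst Language.Term.var = t := by
  induction t with
  | var => rfl
  | func f ts ih => simp only [Language.Term.subst, ih]

namespace Logic

variable {L : FirstOrder.Language.{u, u}} {Var : Type u} {Lg : Logic L Var}

theorem Inc.mono {X Y : Set (L.Term Var)} (hX : Lg.Inc X) (h : X ⊆ Y) : Lg.Inc Y :=
  fun φ => Lg.deriv_mono (hX φ) h

theorem deriv_of_mem {X : Set (L.Term Var)} {φ : L.Term Var} (h : φ ∈ X) : Lg.Deriv X φ :=
  Lg.deriv_mono (Lg.deriv_refl φ) (singleton_subset_iff.2 h)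

theorem isTheory_setOf_deriv (X : Set (L.Term Var)) : Lg.IsTheory {ψ | Lg.Deriv X ψ} :=
  fun _ h => Lg.deriv_cut (fun _ hψ => hψ) h

theorem IsTheory.eq_univ_of_inc {T : Set (L.Term Var)} (hT : Lg.IsTheory T) (h : Lg.Inc T) :
    T = univ :=
  eq_univ_of_forall fun φ => hT φ (h φ)

theorem IsTheory.preimage_subst {T : Set (L.Term Var)} (hT : Lg.IsTheory T)
    (σ : Var → L.Term Var) : Lg.IsTheory ((fun t => t.subst σ) ⁻¹' T) := by
  intro φ h
  refine hT _ (Lg.deriv_mono (Lg.deriv_subst σ h) ?_)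
  exact image_preimage_subset _ _

theorem IsSimple.not_inc {T : Set (L.Term Var)} (hT : Lg.IsSimple T) : ¬ Lg.Inc T :=
  fun h => hT.2.1 (hT.1.eq_univ_of_inc h)

theorem IsSimple.inc_insert {T : Set (L.Term Var)} (hT : Lg.IsSimple T) {φ : L.Term Var}
    (hφ : φ ∉ T) : Lg.Inc (insert φ T) := by
  by_contra hcons
  have hsub : insert φ T ⊆ {ψ | Lg.Deriv (insert φ T) ψ} := fun _ => deriv_of_mem
  have hne : {ψ | Lg.Deriv (insert φ T) ψ} ≠ univ := fun h =>
    hcons fun ψ => (eq_univ_iff_forall.1 h ψ : _)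
  have heq := hT.2.2 _ (isTheory_setOf_deriv _) hne ((subset_insert φ T).trans hsub)
  exact hφ (heq ▸ hsub (mem_insert φ T))

theorem Coatomic.exists_isSimple_superset (hco : Lg.Coatomic) {X : Set (L.Term Var)}
    (hX : ¬ Lg.Inc X) : ∃ T, Lg.IsSimple T ∧ X ⊆ T := by
  have hne : {ψ | Lg.Deriv X ψ} ≠ univ := fun h => hX fun ψ => (eq_univ_iff_forall.1 h ψ : _)
  obtain ⟨T, hT, hXT⟩ := hco _ (isTheory_setOf_deriv X) hne
  exact ⟨T, hT, fun _ hφ => hXT (deriv_of_mem hφ)⟩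

theorem Coatomic.forall_inc_of_forall_isSimple (hco : Lg.Coatomic) {Γ Φ : Set (L.Term Var)}
    (h : ∀ T, Lg.IsSimple T → Lg.Inc (Φ ∪ T) → Lg.Inc (Γ ∪ T)) (Δ : Set (L.Term Var))
    (hΔ : Lg.Inc (Φ ∪ Δ)) : Lg.Inc (Γ ∪ Δ) := by
  by_contra hcons
  obtain ⟨T, hT, hΓΔT⟩ := hco.exists_isSimple_superset hcons
  have hΓT : Lg.Inc (Γ ∪ T) := h T hT (hΔ.mono (union_subset_union_right Φ (by grind)))
  exact hT.not_inc (hΓT.mono (union_subset (by grind) subset_rfl))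

theorem SimpleLocalIL.inc_insert_preimage {κ : Cardinal.{u}} {Ψ : LFam L Var}
    (hΨ : Lg.SimpleLocalIL κ Ψ) (hκ : 1 < κ.ord) {T : Set (L.Term Var)} (hT : Lg.IsSimple T)
    (σ : Var → L.Term Var) {φ : L.Term Var} (hφ : φ.subst σ ∉ T) :
    Lg.Inc (insert φ ((fun t => t.subst σ) ⁻¹' T)) := by
  have hne : Nonempty (Ordinal.ToType 1) := Ordinal.nonempty_toType_iff.2 one_ne_zero
  have hTφ : Lg.Inc (T ∪ range fun _ : Ordinal.ToType 1 => φ.subst σ) := by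
    refine (hT.inc_insert hφ).mono ?_
    rw [range_const, union_singleton]
  obtain ⟨I, hI, hTI⟩ := hΨ.2 1 zero_lt_one hκ T hT _ hTφ
  have hIT : lInst I (fun _ => φ) ⊆ (fun t => t.subst σ) ⁻¹' T := by
    rintro _ ⟨t, ht, rfl⟩
    simp only [mem_preimage, FirstOrder.Language.Term.subst_subst']
    exact hT.1 _ (hTI _ ⟨t, ht, rfl⟩)
  refine (hΨ.1 1 zero_lt_one hκ I hI fun _ => φ).mono ?_
  rw [range_const, singleton_union]
  exact insert_subset_insert hIT

theorem Antiadmissible.inc_union {ι : Type u} {Γ : Set (L.Term Var)} {phis : ι → L.Term Var}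
    (h : Lg.Antiadmissible Γ phis) (Δ : Set (L.Term Var)) (hΔ : Lg.Inc (range phis ∪ Δ)) :
    Lg.Inc (Γ ∪ Δ) := by
  simpa only [FirstOrder.Language.Term.subst_var, image_id'] using
    h Language.Term.var Δ (by simpa only [FirstOrder.Language.Term.subst_var] using hΔ)

theorem antiadmissible_of_forall_inc {κ : Cardinal.{u}} {Ψ : LFam L Var} (hco : Lg.Coatomic)
    (hΨ : Lg.SimpleLocalIL κ Ψ) (hκ : 1 < κ.ord) {ι : Type u} {Γ : Set (L.Term Var)}
    {phis : ι → L.Term Var}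
    (h : ∀ Δ : Set (L.Term Var), Lg.Inc (range phis ∪ Δ) → Lg.Inc (Γ ∪ Δ)) :
    Lg.Antiadmissible Γ phis := by
  intro σ Δ hinc
  by_contra hcons
  obtain ⟨T, hT, hΓΔT⟩ := hco.exists_isSimple_superset hcons
  obtain ⟨i, hi⟩ : ∃ i, (phis i).subst σ ∉ T := by
    by_contra! hall
    exact hT.not_inc (hinc.mono (union_subset (range_subset_iff.2 hall) (by grind)))
  set S := (fun t : L.Term Var => t.subst σ) ⁻¹' T
  have hΓS : Γ ⊆ S := fun γ hγ => hΓΔT (Or.inl ⟨γ, hγ, rfl⟩)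
  have hS : Lg.Inc (Γ ∪ S) :=
    h S ((hΨ.inc_insert_preimage hκ hT σ hi).mono (insert_subset (Or.inl ⟨i, rfl⟩)
      subset_union_right))
  have hSuniv : S = univ := (hT.1.preimage_subst σ).eq_univ_of_inc (hS.mono (union_subset hΓS subset_rfl))
  exact hi (eq_univ_iff_forall.1 hSuniv (phis i))

end Logic

/-- in a coatomic logic with the simple local IL, antiadmissibility
of `Γ ⊢ φ̄` reduces to preservation of inconsistency in every context `Δ`, and
`Δ` may even be restricted to simple theories. -/
theorem statement_17 {L : FirstOrder.Language.{u, u}} {Var : Type u} (Lg : Logic L Var) (hco : Lg.Coatomic)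
    (hsil : ∃ Ψ : LFam L Var, Lg.SimpleLocalIL 2 Ψ)
    {ι : Type u} (Γ : Set (L.Term Var)) (phis : ι → L.Term Var) :
    (Lg.Antiadmissible Γ phis ↔
      ∀ Δ : Set (L.Term Var), Lg.Inc (range phis ∪ Δ) → Lg.Inc (Γ ∪ Δ)) ∧
    (Lg.Antiadmissible Γ phis ↔
      ∀ T : Set (L.Term Var), Lg.IsSimple T →
        Lg.Inc (range phis ∪ T) → Lg.Inc (Γ ∪ T)) := by
  obtain ⟨Ψ, hΨ⟩ := hsil
  have h12 : (1 : Ordinal.{u}) < (2 : Cardinal.{u}).ord := by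
    rw [Cardinal.lt_ord, Ordinal.card_one]
    exact_mod_cast one_lt_two
  have hΔ : Lg.Antiadmissible Γ phis ↔
      ∀ Δ : Set (L.Term Var), Lg.Inc (range phis ∪ Δ) → Lg.Inc (Γ ∪ Δ) :=
    ⟨Logic.Antiadmissible.inc_union, Logic.antiadmissible_of_forall_inc hco hΨ h12⟩
  exact ⟨hΔ, hΔ.trans ⟨fun h T _ => h T, hco.forall_inc_of_forall_isSimple⟩⟩
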